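/- arXiv:math/0104132 — 5 statements merged into one kernel-verified Lean document; each statement's English description precedes it below -/
import Mathlib

section
/- If u is a positive continuous increasing function on [0,∞) that is (log, x^k)-convex for some k > 0, then u is (log, exp)-convex, i.e., x ↦ log u(e^x) is convex on ℝ. -/
open Real Set

theorem stmt2 (u : ℝ → ℝ) (hpos : ∀ r ∈ Ici (0:ℝ), 0 < u r)
    (hcont : ContinuousOn u (Ici 0)) (hmono : MonotoneOn u (Ici 0))
    (k : ℝ) (hk : 0 < k)
    (hxk : ConvexOn ℝ (Ici 0) (fun x => Real.log (u (x ^ k)))) :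
    ConvexOn ℝ univ (fun x => Real.log (u (Real.exp x))) := by
  set g : ℝ → ℝ := fun x => Real.log (u (x ^ k)) with hg
  set f : ℝ → ℝ := fun x => Real.exp (x / k) with hfdef
  have hmg : MonotoneOn g (Ici 0) := by
    intro x hx y hy hxy
    have hxk0 : (0:ℝ) ≤ x ^ k := Real.rpow_nonneg hx k
    have hyk0 : (0:ℝ) ≤ y ^ k := Real.rpow_nonneg hy k
    exact Real.log_le_log (hpos _ hxk0)
      (hmono hxk0 hyk0 (Real.rpow_le_rpow hx hxy hk.le))
  have hf : ConvexOn ℝ univ f := by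
    have h2 : ConvexOn ℝ univ (fun x : ℝ => Real.exp ((1/k) * x)) := by
      refine ⟨convex_univ, fun x _ y _ a b ha hb hab => ?_⟩
      simpa [add_mul, mul_comm, mul_left_comm, mul_assoc] using
        convexOn_exp.2 (mem_univ ((1/k) * x)) (mem_univ ((1/k) * y)) ha hb hab
    have : f = fun x : ℝ => Real.exp ((1/k) * x) := by
      funext x; simp [hfdef, div_eq_mul_inv, mul_comm]
    rw [this]; exact h2
  have himg : f '' univ = Ioi 0 := by
    apply Subset.antisymm
    · rintro _ ⟨x, -, rfl⟩; exact Real.exp_pos _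
    · intro y hy
      exact ⟨k * Real.log y, mem_univ _, by
        simp [hfdef, mul_div_assoc, mul_div_cancel_left₀ _ hk.ne',
          Real.exp_log hy]⟩
  have hgI : ConvexOn ℝ (f '' univ) g := by
    rw [himg]; exact hxk.subset Ioi_subset_Ici_self (convex_Ioi 0)
  have hmgI : MonotoneOn g (f '' univ) := by
    rw [himg]; exact hmg.mono Ioi_subset_Ici_self
  have hcomp := hgI.comp hf hmgI
  have : (g ∘ f) = fun x => Real.log (u (Real.exp x)) := by
    funext x
    have : f x ^ k = Real.exp x := by
      rw [hfdef]
      rw [← Real.exp_mul, div_mul_cancel₀ _ hk.ne']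
    simp [Function.comp, hg, this]
  rwa [this] at hcomp
end

section
/- Let u ∈ C_{+,log} be (log, exp)-convex. Then the Legendre transform ℓ_u is eventually decreasing (there exists t₀ such that ℓ_u is decreasing on [t₀,∞)) and lim_{t→∞} ℓ_u(t)^{1/t} = 0. -/
open Real Set Filter

noncomputable def leg (u : ℝ → ℝ) (t : ℝ) : ℝ := ⨅ r : Ioi (0:ℝ), u r / (r : ℝ) ^ t

def CplusLog (u : ℝ → ℝ) : Prop :=
  ContinuousOn u (Ici 0) ∧ (∀ r ∈ Ici (0:ℝ), 0 < u r) ∧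
  Tendsto (fun r => Real.log (u r) / Real.log r) atTop atTop

lemma leg_bdd (u : ℝ → ℝ) (hpos : ∀ r ∈ Ici (0:ℝ), 0 < u r) (t : ℝ) :
    BddBelow (Set.range fun r : Ioi (0:ℝ) => u r / (r : ℝ) ^ t) := by
  refine ⟨0, ?_⟩
  rintro x ⟨⟨r, hr⟩, rfl⟩
  exact div_nonneg (hpos r (le_of_lt (show (0:ℝ) < r from hr))).le (Real.rpow_nonneg (le_of_lt hr) t)

lemma leg_nonneg (u : ℝ → ℝ) (hpos : ∀ r ∈ Ici (0:ℝ), 0 < u r) (t : ℝ) :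
    0 ≤ leg u t :=
  Real.iInf_nonneg fun ⟨r, hr⟩ =>
    div_nonneg (hpos r (le_of_lt (show (0:ℝ) < r from hr))).le (Real.rpow_nonneg (le_of_lt hr) t)

lemma leg_le (u : ℝ → ℝ) (hpos : ∀ r ∈ Ici (0:ℝ), 0 < u r) (t r : ℝ) (hr : 0 < r) :
    leg u t ≤ u r / r ^ t :=
  ciInf_le (leg_bdd u hpos t) ⟨r, hr⟩

theorem stmt9 (u : ℝ → ℝ) (hu : CplusLog u)
    (hle : ConvexOn ℝ univ (fun x => Real.log (u (Real.exp x)))) :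
    (∃ t₀ : ℝ, AntitoneOn (leg u) (Ici t₀)) ∧
    Tendsto (fun t : ℝ => leg u t ^ (1 / t)) atTop (nhds 0) := by
  obtain ⟨hc, hpos, _⟩ := hu
  constructor
  · -- minimum of u on [0,1]
    obtain ⟨x₀, hx₀, hmin⟩ := (isCompact_Icc (a := (0:ℝ)) (b := 1)).exists_isMinOn
      ⟨0, by norm_num⟩ (hc.mono (Icc_subset_Ici_self))
    set m : ℝ := u x₀ with hm
    have hmpos : 0 < m := hpos x₀ hx₀.1
    have hUE : 0 < u (Real.exp 1) := hpos _ (Real.exp_pos 1).le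
    set t₀ : ℝ := max 0 (Real.log (u (Real.exp 1) / m)) with ht₀
    have ht₀0 : (0:ℝ) ≤ t₀ := le_max_left _ _
    have hkey : ∀ t, t₀ ≤ t → leg u t ≤ m := by
      intro t ht
      have h1 : leg u t ≤ u (Real.exp 1) / (Real.exp 1) ^ t :=
        leg_le u hpos t _ (Real.exp_pos 1)
      have h2 : (Real.exp 1 : ℝ) ^ t = Real.exp t := Real.exp_one_rpow t
      have h3 : u (Real.exp 1) / m ≤ Real.exp t := by
        calc u (Real.exp 1) / m ≤ Real.exp (Real.log (u (Real.exp 1) / m)) :=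
              le_of_eq (Real.exp_log (by positivity)).symm
          _ ≤ Real.exp t := Real.exp_le_exp.2 (le_trans (le_max_right _ _) ht)
      have h4 : u (Real.exp 1) / Real.exp t ≤ m := by
        rw [div_le_iff₀ (Real.exp_pos t)]
        rw [div_le_iff₀ hmpos] at h3
        linarith [h3]
      calc leg u t ≤ u (Real.exp 1) / Real.exp t := by rw [← h2]; exact h1
        _ ≤ m := h4
    refine ⟨t₀, ?_⟩
    intro s hs t ht hst
    refine le_ciInf ?_
    rintro ⟨r, hr⟩
    simp only
    rcases le_or_gt 1 r with h1r | h1r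
    · calc leg u t ≤ u r / r ^ t := leg_le u hpos t r hr
        _ ≤ u r / r ^ s := by
            apply div_le_div_of_nonneg_left (hpos r (show (0:ℝ) < r from hr).le).le
              (Real.rpow_pos_of_pos hr s)
            exact Real.rpow_le_rpow_of_exponent_le h1r hst
    · have hrs : r ^ s ≤ 1 :=
        Real.rpow_le_one hr.le h1r.le (le_trans ht₀0 hs)
      have : m ≤ u r / r ^ s := by
        calc m ≤ u r := hmin ⟨hr.le, h1r.le⟩
          _ = u r / 1 := (div_one _).symm
          _ ≤ u r / r ^ s := by
              apply div_le_div_of_nonneg_left (hpos r (show (0:ℝ) < r from hr).le).le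
                (Real.rpow_pos_of_pos hr s) hrs
      exact le_trans (hkey t (le_trans hs hst)) this
  · rw [Metric.tendsto_nhds]
    intro ε hε
    set r : ℝ := max 1 (3 / ε) with hrdef
    have hr1 : (1:ℝ) ≤ r := le_max_left _ _
    have hr0 : (0:ℝ) < r := lt_of_lt_of_le one_pos hr1
    have hur : 0 < u r := hpos r hr0.le
    have h2r : 2 / r < ε := by
      rw [div_lt_iff₀ hr0]
      have : 3 ≤ ε * r := by
        calc (3:ℝ) = ε * (3 / ε) := by field_simp
          _ ≤ ε * r := by
              apply mul_le_mul_of_nonneg_left (le_max_right _ _) hε.le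
      linarith
    have htend : Tendsto (fun t : ℝ => (u r) ^ (1 / t)) atTop (nhds 1) := by
      have h1 : Tendsto (fun t : ℝ => Real.log (u r) * (1 / t)) atTop (nhds 0) := by
        simpa using (tendsto_inv_atTop_zero (𝕜 := ℝ)).const_mul (Real.log (u r))
      have h2 := (Real.continuous_exp.tendsto 0).comp h1
      simp only [Real.exp_zero] at h2
      refine h2.congr fun t => ?_
      simp [Real.rpow_def_of_pos hur, Function.comp]
    have hev : ∀ᶠ t : ℝ in atTop, (u r) ^ (1 / t) < 2 :=
      htend.eventually_lt_const one_lt_two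
    filter_upwards [hev, eventually_ge_atTop (1:ℝ)] with t hlt ht1
    have ht0 : (0:ℝ) < t := lt_of_lt_of_le one_pos ht1
    have hln : 0 ≤ leg u t := leg_nonneg u hpos t
    rw [Real.dist_eq, sub_zero, abs_of_nonneg (Real.rpow_nonneg hln _)]
    calc leg u t ^ (1 / t) ≤ (u r / r ^ t) ^ (1 / t) :=
          Real.rpow_le_rpow hln (leg_le u hpos t r hr0) (by positivity)
      _ = (u r) ^ (1 / t) / r := by
          rw [Real.div_rpow hur.le (Real.rpow_nonneg hr0.le t),
            ← Real.rpow_mul hr0.le, mul_one_div, div_self (ne_of_gt ht0),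
            Real.rpow_one]
      _ < 2 / r := by gcongr
      _ < ε := h2r
end

section
/- Let u ∈ C_{+,log} be (log, exp)-convex. Then u(r) = sup_{t≥0} ℓ_u(t)·r^t for all r ≥ 0 (the Legendre transform is inverted by this supremum). -/
open Real Set Filter

/-- A convex function on ℝ bounded above on `(-∞, 0]` is monotone. -/
lemma aux_mono (g : ℝ → ℝ) (hg : ConvexOn ℝ univ g) (C : ℝ) (hC : ∀ x ≤ (0:ℝ), g x ≤ C) :
    Monotone g := by
  intro a b hab
  rcases eq_or_lt_of_le hab with rfl | hab
  · exact le_rfl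
  by_contra hgt
  push_neg at hgt
  set d := g a - g b with hd
  have hd0 : 0 < d := by simp [hd]; linarith
  set x : ℝ := min (min (a - 1) (-1)) (a - (b - a) * (C + 1 - g a) / d) with hx
  have hxa : x < a := lt_of_le_of_lt (le_trans (min_le_left _ _) (min_le_left _ _)) (by linarith)
  have hx0 : x ≤ 0 := le_trans (min_le_left _ _) (le_trans (min_le_right _ _) (by norm_num))
  have hxq : x ≤ a - (b - a) * (C + 1 - g a) / d := min_le_right _ _
  have hbx : 0 < b - x := by linarith
  have hba : 0 < b - a := by linarith
  -- convexity at a = θ x + (1-θ) b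
  set θ : ℝ := (b - a) / (b - x) with hθ
  have hθ0 : 0 < θ := div_pos hba hbx
  have hθ1 : θ < 1 := (div_lt_one hbx).mpr (by linarith)
  have hθbx : θ * (b - x) = b - a := div_mul_cancel₀ _ (ne_of_gt hbx)
  have hcomb : θ • x + (1 - θ) • b = a := by
    simp only [smul_eq_mul]
    linear_combination (-1 : ℝ) * hθbx
  have hconv := hg.2 (mem_univ x) (mem_univ b)
    (le_of_lt hθ0) (by linarith : (0:ℝ) ≤ 1 - θ) (by ring : θ + (1 - θ) = 1)
  rw [hcomb] at hconv
  -- clear denominators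
  have hstar : g a * (b - x) ≤ (b - a) * g x + (a - x) * g b := by
    have := mul_le_mul_of_nonneg_right hconv hbx.le
    calc g a * (b - x) ≤ (θ * g x + (1 - θ) * g b) * (b - x) := by
          simpa [smul_eq_mul] using this
      _ = (θ * (b - x)) * g x + ((b - x) - θ * (b - x)) * g b := by ring
      _ = (b - a) * g x + (a - x) * g b := by rw [hθbx]; ring_nf
  have hss : (b - a) * (C + 1 - g a) ≤ (a - x) * d := by
    have h1 : (b - a) * (C + 1 - g a) / d ≤ a - x := by linarith
    have := mul_le_mul_of_nonneg_right h1 hd0.le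
    rwa [div_mul_cancel₀ _ (ne_of_gt hd0)] at this
  have hgx : g x ≤ C := hC x hx0
  nlinarith [mul_le_mul_of_nonneg_left hgx hba.le]

/-- Existence of a nonnegative subgradient for a monotone convex function on ℝ. -/
lemma aux_subgrad (g : ℝ → ℝ) (hg : ConvexOn ℝ univ g) (hmono : Monotone g) (x₀ : ℝ) :
    ∃ t ≥ (0:ℝ), ∀ x, g x₀ + t * (x - x₀) ≤ g x := by
  set S : Set ℝ := (fun b => (g b - g x₀) / (b - x₀)) '' Ioi x₀ with hS
  have hSne : S.Nonempty := ⟨_, ⟨x₀ + 1, by simp, rfl⟩⟩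
  have hS0 : ∀ m ∈ S, (0:ℝ) ≤ m := by
    rintro m ⟨b, hb, rfl⟩
    exact div_nonneg (by linarith [hmono (le_of_lt hb)]) (by simp [mem_Ioi] at hb; linarith)
  set t : ℝ := sInf S with ht
  have hbdd : BddBelow S := ⟨0, hS0⟩
  refine ⟨t, le_csInf hSne hS0, fun x => ?_⟩
  rcases lt_trichotomy x x₀ with hlt | rfl | hgt
  · -- left of x₀ : every right slope dominates the left slope
    have hsl : (g x₀ - g x) / (x₀ - x) ≤ t := by
      apply le_csInf hSne
      rintro m ⟨b, hb, rfl⟩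
      exact hg.slope_mono_adjacent (mem_univ x) (mem_univ b) hlt hb
    have hpos : 0 < x₀ - x := by linarith
    have := mul_le_mul_of_nonneg_right hsl hpos.le
    rw [div_mul_cancel₀ _ (ne_of_gt hpos)] at this
    nlinarith
  · simp
  · have hsl : t ≤ (g x - g x₀) / (x - x₀) := csInf_le hbdd ⟨x, hgt, rfl⟩
    have hpos : 0 < x - x₀ := by linarith
    have := mul_le_mul_of_nonneg_right hsl hpos.le
    rw [div_mul_cancel₀ _ (ne_of_gt hpos)] at this
    linarith

theorem stmt10 (u : ℝ → ℝ) (hu : CplusLog u)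
    (hle : ConvexOn ℝ univ (fun x => Real.log (u (Real.exp x)))) :
    ∀ r ≥ (0:ℝ), IsLUB {y : ℝ | ∃ t ≥ (0:ℝ), y = leg u t * r ^ t} (u r) := by
  obtain ⟨hcont, hpos, -⟩ := hu
  set g : ℝ → ℝ := fun x => Real.log (u (Real.exp x)) with hgdef
  have upos : ∀ s : ℝ, 0 ≤ s → 0 < u s := fun s hs => hpos s hs
  -- monotonicity of g
  have hgmono : Monotone g := by
    obtain ⟨s₀, hs₀, hmax⟩ := isCompact_Icc.exists_isMaxOn (⟨0, by norm_num⟩ : (Icc (0:ℝ) 1).Nonempty)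
      (hcont.mono (Icc_subset_Ici_self))
    refine aux_mono g hle (Real.log (u s₀)) (fun x hx => ?_)
    have hmem : Real.exp x ∈ Icc (0:ℝ) 1 :=
      ⟨(Real.exp_pos x).le, Real.exp_le_one_iff.mpr hx⟩
    exact Real.log_le_log (upos _ hmem.1) (hmax hmem)
  have umono : ∀ s r : ℝ, 0 < s → s ≤ r → u s ≤ u r := by
    intro s r hs hsr
    have := hgmono (Real.log_le_log hs hsr)
    simp only [hgdef, Real.exp_log hs, Real.exp_log (lt_of_lt_of_le hs hsr)] at this
    exact (Real.log_le_log_iff (upos s hs.le) (upos r (hs.le.trans hsr))).1 this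
  -- basic facts about leg
  have hbdd : ∀ t : ℝ, BddBelow (range fun s : Ioi (0:ℝ) => u s / (s : ℝ) ^ t) := by
    intro t
    refine ⟨0, ?_⟩
    rintro y ⟨⟨s, hs⟩, rfl⟩
    exact div_nonneg (upos s (le_of_lt hs)).le (Real.rpow_nonneg (le_of_lt hs) t)
  have leg_le : ∀ t : ℝ, ∀ s : ℝ, 0 < s → leg u t ≤ u s / s ^ t := by
    intro t s hs
    exact ciInf_le (hbdd t) ⟨s, hs⟩
  intro r hr
  rcases eq_or_lt_of_le hr with rfl | hrpos
  · -- r = 0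
    have htend : Tendsto u (nhdsWithin 0 (Ioi (0:ℝ))) (nhds (u 0)) :=
      ((hcont 0 (self_mem_Ici)).mono_left (nhdsWithin_mono _ Ioi_subset_Ici_self))
    have hleg0 : leg u 0 = u 0 := by
      apply le_antisymm
      · refine ge_of_tendsto htend ?_
        filter_upwards [self_mem_nhdsWithin] with s hs
        have := leg_le 0 s hs
        simpa [Real.rpow_zero] using this
      · refine le_ciInf ?_
        rintro ⟨s, hs⟩
        have h1 : u 0 ≤ u s := by
          refine le_of_tendsto htend ?_
          filter_upwards [Ioo_mem_nhdsGT_of_mem ⟨le_refl 0, hs⟩] with s' hs'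
          exact umono s' s hs'.1 hs'.2.le
        simpa [Real.rpow_zero] using h1
    constructor
    · rintro y ⟨t, ht, rfl⟩
      rcases eq_or_lt_of_le ht with rfl | htpos
      · simp [hleg0]
      · rw [Real.zero_rpow (ne_of_gt htpos), mul_zero]
        exact (upos 0 le_rfl).le
    · intro b hb
      exact hb ⟨0, le_rfl, by simp [hleg0]⟩
  · -- r > 0
    obtain ⟨t, ht0, hsub⟩ := aux_subgrad g hle hgmono (Real.log r)
    have hrt : (0:ℝ) < r ^ t := Real.rpow_pos_of_pos hrpos t
    have hkey : ∀ s : ℝ, 0 < s → u r / r ^ t ≤ u s / s ^ t := by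
      intro s hs
      have hst : (0:ℝ) < s ^ t := Real.rpow_pos_of_pos hs t
      have h1 := hsub (Real.log s)
      simp only [hgdef, Real.exp_log hs, Real.exp_log hrpos] at h1
      have h2 : Real.log (u r / r ^ t) ≤ Real.log (u s / s ^ t) := by
        rw [Real.log_div (ne_of_gt (upos r hrpos.le)) (ne_of_gt hrt),
          Real.log_div (ne_of_gt (upos s hs.le)) (ne_of_gt hst),
          Real.log_rpow hrpos, Real.log_rpow hs]
        linarith
      exact (Real.log_le_log_iff (div_pos (upos r hrpos.le) hrt)
        (div_pos (upos s hs.le) hst)).1 h2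
    have hlegt : leg u t = u r / r ^ t := by
      apply le_antisymm (leg_le t r hrpos)
      exact le_ciInf fun ⟨s, hs⟩ => hkey s hs
    have hmem : u r = leg u t * r ^ t := by
      rw [hlegt, div_mul_cancel₀ _ (ne_of_gt hrt)]
    constructor
    · rintro y ⟨t', ht', rfl⟩
      have h := leg_le t' r hrpos
      have hrt' : (0:ℝ) < r ^ t' := Real.rpow_pos_of_pos hrpos t'
      calc leg u t' * r ^ t' ≤ (u r / r ^ t') * r ^ t' :=
            mul_le_mul_of_nonneg_right h hrt'.le
        _ = u r := div_mul_cancel₀ _ (ne_of_gt hrt')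
    · intro b hb
      exact hb ⟨t, ht0, hmem⟩
end

section
/- Let u, v ∈ C_{+,log} both be (log, exp)-convex. Then ℓ_u(t) ≤ ℓ_v(t) for all t ≥ 0 if and only if u(r) ≤ v(r) for all r ≥ 0. In particular u = v if and only if ℓ_u = ℓ_v. -/
open Real Set Filter

noncomputable def F (u : ℝ → ℝ) (x : ℝ) : ℝ := Real.log (u (Real.exp x))

variable {u : ℝ → ℝ}

lemma F_tendsto_atBot (hu : CplusLog u) :
    Tendsto (F u) atBot (nhds (Real.log (u 0))) := by
  have h1 : Tendsto Real.exp atBot (nhdsWithin (0:ℝ) (Ici 0)) := by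
    rw [tendsto_nhdsWithin_iff]
    exact ⟨Real.tendsto_exp_atBot, Eventually.of_forall fun x => (Real.exp_pos x).le⟩
  have h2 : Tendsto (fun x => u (Real.exp x)) atBot (nhds (u 0)) :=
    (hu.1 0 self_mem_Ici).tendsto.comp h1
  exact (Real.continuousAt_log (hu.2.1 0 self_mem_Ici).ne').tendsto.comp h2

lemma F_mono (hu : CplusLog u)
    (hue : ConvexOn ℝ univ (fun x => Real.log (u (Real.exp x)))) : Monotone (F u) := by
  by_contra h
  rw [Monotone] at h; push_neg at h
  obtain ⟨a, b, hab, hfb⟩ := h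
  have hab' : a < b := lt_of_le_of_ne hab (by rintro rfl; exact lt_irrefl _ hfb)
  set s : ℝ := (F u b - F u a) / (b - a) with hs
  have hsneg : s < 0 := div_neg_of_neg_of_pos (by simpa [F] using sub_neg.2 hfb) (by linarith)
  have hbound : ∀ x < a, F u a + s * (x - a) ≤ F u x := by
    intro x hx
    have := hue.slope_mono_adjacent (mem_univ x) (mem_univ b) hx hab'
    have hax : (0:ℝ) < a - x := by linarith
    rw [div_le_div_iff₀ (by linarith) (by linarith)] at this
    have h2 : F u a - F u x ≤ s * (a - x) := by
      rw [hs, div_mul_eq_mul_div, le_div_iff₀ (by linarith)]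
      simpa [F] using this
    nlinarith
  have hlin : Tendsto (fun x => F u a + s * (x - a)) atBot atTop := by
    apply tendsto_atTop_add_const_left
    have : Tendsto (fun x : ℝ => x - a) atBot atBot := tendsto_atBot_add_const_right _ _ tendsto_id
    exact (tendsto_const_mul_atTop_of_neg hsneg).2 this
  have : Tendsto (F u) atBot atTop :=
    tendsto_atTop_mono' _ (eventually_atBot.2 ⟨a - 1, fun x hx => hbound x (by linarith)⟩) hlin
  exact not_tendsto_atTop_of_tendsto_nhds (F_tendsto_atBot hu) this

lemma F_lb (hu : CplusLog u)
    (hue : ConvexOn ℝ univ (fun x => Real.log (u (Real.exp x)))) (x : ℝ) :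
    Real.log (u 0) ≤ F u x :=
  le_of_tendsto (F_tendsto_atBot hu)
    (eventually_atBot.2 ⟨x, fun _ hy => F_mono hu hue hy⟩)

lemma udiv (hu : CplusLog u) {r : ℝ} (hr : 0 < r) (t : ℝ) :
    u r / r ^ t = Real.exp (F u (Real.log r) - t * Real.log r) := by
  rw [Real.exp_sub, F, Real.exp_log hr, Real.exp_log (hu.2.1 r hr.le),
    Real.rpow_def_of_pos hr, mul_comm (Real.log r) t]

lemma F_superlin (hu : CplusLog u) : Tendsto (fun x => F u x / x) atTop atTop := by
  have : Tendsto (fun x => Real.log (u (Real.exp x)) / Real.log (Real.exp x)) atTop atTop :=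
    hu.2.2.comp Real.tendsto_exp_atTop
  simpa [Real.log_exp, F] using this

lemma bdd (hu : CplusLog u)
    (hue : ConvexOn ℝ univ (fun x => Real.log (u (Real.exp x))))
    {t : ℝ} (ht : 0 ≤ t) : ∃ c : ℝ, ∀ r > (0:ℝ), c ≤ u r / r ^ t := by
  obtain ⟨X, hX⟩ := eventually_atTop.1
    (((F_superlin hu).eventually_ge_atTop (t + 1)).and (eventually_ge_atTop 1))
  set X0 : ℝ := max X 1 with hX0
  refine ⟨Real.exp (min 0 (Real.log (u 0) - t * X0)), fun r hr => ?_⟩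
  rw [udiv hu hr t]
  apply Real.exp_le_exp.2
  set x := Real.log r with hx
  rcases le_or_gt x X0 with hc | hc
  · refine (min_le_right _ _).trans ?_
    have := F_lb hu hue x
    nlinarith
  · refine (min_le_left _ _).trans ?_
    have hx1 : (1:ℝ) ≤ x := le_trans (le_max_right _ _) hc.le
    obtain ⟨h1, h2⟩ := hX x (le_trans (le_max_left _ _) hc.le)
    rw [le_div_iff₀ (by linarith)] at h1
    nlinarith

lemma bddBelow_range (hu : CplusLog u)
    (hue : ConvexOn ℝ univ (fun x => Real.log (u (Real.exp x))))
    {t : ℝ} (ht : 0 ≤ t) :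
    BddBelow (Set.range fun r : Ioi (0:ℝ) => u r / (r : ℝ) ^ t) := by
  obtain ⟨c, hc⟩ := bdd hu hue ht
  exact ⟨c, by rintro _ ⟨r, rfl⟩; exact hc r r.2⟩

lemma leg_le_s11 (hu : CplusLog u)
    (hue : ConvexOn ℝ univ (fun x => Real.log (u (Real.exp x))))
    {t : ℝ} (ht : 0 ≤ t) {r : ℝ} (hr : 0 < r) : leg u t ≤ u r / r ^ t :=
  ciInf_le (bddBelow_range hu hue ht) (⟨r, hr⟩ : Ioi (0:ℝ))

lemma subgrad (hu : CplusLog u)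
    (hue : ConvexOn ℝ univ (fun x => Real.log (u (Real.exp x)))) (x : ℝ) :
    ∃ t ≥ (0:ℝ), ∀ y, F u x + t * (y - x) ≤ F u y := by
  have hF : ∀ a b c : ℝ, a < b → b < c →
      (F u b - F u a) / (b - a) ≤ (F u c - F u b) / (c - b) := fun a b c h1 h2 =>
    hue.slope_mono_adjacent (mem_univ a) (mem_univ c) h1 h2
  set S : Set ℝ := (fun z => (F u x - F u z) / (x - z)) '' Iio x with hS
  have hne : S.Nonempty := ⟨_, ⟨x - 1, by simp, rfl⟩⟩
  have hbdd : BddAbove S := by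
    refine ⟨(F u (x + 1) - F u x) / (x + 1 - x), ?_⟩
    rintro _ ⟨z, hz, rfl⟩
    have := hF z x (x + 1) hz (by linarith)
    convert this using 2 <;> ring
  set t : ℝ := sSup S with htdef
  have htmem : (F u x - F u (x - 1)) / (x - (x - 1)) ≤ t :=
    le_csSup hbdd ⟨x - 1, by simp, rfl⟩
  have ht0 : 0 ≤ t := by
    refine le_trans ?_ htmem
    have := F_mono hu hue (show x - 1 ≤ x by linarith)
    apply div_nonneg <;> linarith
  refine ⟨t, ht0, fun y => ?_⟩
  rcases lt_trichotomy y x with hc | hc | hc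
  · have h1 : (F u x - F u y) / (x - y) ≤ t := le_csSup hbdd ⟨y, hc, rfl⟩
    rw [div_le_iff₀ (by linarith)] at h1
    nlinarith
  · simp [hc]
  · have h1 : t ≤ (F u y - F u x) / (y - x) := by
      refine csSup_le hne ?_
      rintro _ ⟨z, hz, rfl⟩
      have := hF z x y hz hc
      convert this using 2 <;> ring
    rw [le_div_iff₀ (by linarith)] at h1
    nlinarith

lemma exists_t (hu : CplusLog u)
    (hue : ConvexOn ℝ univ (fun x => Real.log (u (Real.exp x))))
    {r : ℝ} (hr : 0 < r) : ∃ t ≥ (0:ℝ), u r / r ^ t ≤ leg u t := by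
  obtain ⟨t, ht0, hsub⟩ := subgrad hu hue (Real.log r)
  refine ⟨t, ht0, le_ciInf ?_⟩
  rintro ⟨r', hr'⟩
  rw [udiv hu hr t, udiv hu (show (0:ℝ) < r' from hr') t]
  apply Real.exp_le_exp.2
  have := hsub (Real.log r')
  nlinarith

lemma key (u v : ℝ → ℝ) (hu : CplusLog u) (hv : CplusLog v)
    (hue : ConvexOn ℝ univ (fun x => Real.log (u (Real.exp x))))
    (hve : ConvexOn ℝ univ (fun x => Real.log (v (Real.exp x)))) :
    (∀ t ≥ (0:ℝ), leg u t ≤ leg v t) ↔ (∀ r ≥ (0:ℝ), u r ≤ v r) := by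
  constructor
  · intro h
    have hpos : ∀ r > (0:ℝ), u r ≤ v r := by
      intro r hr
      obtain ⟨t, ht0, htle⟩ := exists_t hu hue hr
      have h1 : u r / r ^ t ≤ v r / r ^ t :=
        le_trans htle (le_trans (h t ht0) (leg_le_s11 hv hve ht0 hr))
      exact (div_le_div_iff_of_pos_right (Real.rpow_pos_of_pos hr t)).1 h1
    intro r hr
    rcases eq_or_lt_of_le hr with rfl | hr'
    · have h1 : Tendsto u (nhdsWithin (0:ℝ) (Ioi 0)) (nhds (u 0)) :=
        (hu.1 0 self_mem_Ici).tendsto.mono_left (nhdsWithin_mono _ Ioi_subset_Ici_self)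
      have h2 : Tendsto v (nhdsWithin (0:ℝ) (Ioi 0)) (nhds (v 0)) :=
        (hv.1 0 self_mem_Ici).tendsto.mono_left (nhdsWithin_mono _ Ioi_subset_Ici_self)
      refine le_of_tendsto_of_tendsto h1 h2 ?_
      filter_upwards [self_mem_nhdsWithin] with x hx
      exact hpos x hx
    · exact hpos r hr'
  · intro h t ht
    refine le_ciInf ?_
    rintro ⟨r, hr⟩
    refine le_trans (leg_le_s11 hu hue ht (show (0:ℝ) < r from hr)) ?_
    exact (div_le_div_iff_of_pos_right (Real.rpow_pos_of_pos hr t)).2 (h r (le_of_lt hr))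

theorem stmt11 (u v : ℝ → ℝ) (hu : CplusLog u) (hv : CplusLog v)
    (hue : ConvexOn ℝ univ (fun x => Real.log (u (Real.exp x))))
    (hve : ConvexOn ℝ univ (fun x => Real.log (v (Real.exp x)))) :
    ((∀ t ≥ (0:ℝ), leg u t ≤ leg v t) ↔ (∀ r ≥ (0:ℝ), u r ≤ v r)) ∧
    ((∀ r ≥ (0:ℝ), u r = v r) ↔ (∀ t ≥ (0:ℝ), leg u t = leg v t)) := by
  refine ⟨key u v hu hv hue hve, ?_, ?_⟩
  · intro h t ht
    exact le_antisymm ((key u v hu hv hue hve).2 (fun r hr => (h r hr).le) t ht)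
      ((key v u hv hu hve hue).2 (fun r hr => (h r hr).ge) t ht)
  · intro h r hr
    exact le_antisymm ((key u v hu hv hue hve).1 (fun t ht => (h t ht).le) r hr)
      ((key v u hv hu hve hue).1 (fun t ht => (h t ht).ge) r hr)
end

section
/- Let u ∈ C_{+,1/2}. Then its dual Legendre function u*(r) = sup_{s>0} e^{2√(rs)}/u(s) belongs to C_{+,1/2}, is increasing, and is (log, x²)-convex on [0,∞). -/
open Real Set Filter

def CplusHalf (u : ℝ → ℝ) : Prop :=
  ContinuousOn u (Ici 0) ∧ (∀ r ∈ Ici (0:ℝ), 0 < u r) ∧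
  Tendsto (fun r => Real.log (u r) / Real.sqrt r) atTop atTop

noncomputable def dualLeg (u : ℝ → ℝ) (r : ℝ) : ℝ :=
  sSup {y : ℝ | ∃ s > (0:ℝ), y = Real.exp (2 * Real.sqrt (r * s)) / u s}

namespace Stmt18Aux

variable {u : ℝ → ℝ}

/-- the set whose sup is `dualLeg`. -/
def Sset (u : ℝ → ℝ) (r : ℝ) : Set ℝ :=
  {y : ℝ | ∃ s > (0:ℝ), y = Real.exp (2 * Real.sqrt (r * s)) / u s}

lemma dualLeg_eq (u : ℝ → ℝ) (r : ℝ) : dualLeg u r = sSup (Sset u r) := rfl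

lemma mem_Sset {r s : ℝ} (hs : 0 < s) :
    Real.exp (2 * Real.sqrt (r * s)) / u s ∈ Sset u r := ⟨s, hs, rfl⟩

lemma Sset_nonempty (u : ℝ → ℝ) (r : ℝ) : (Sset u r).Nonempty :=
  ⟨_, mem_Sset one_pos⟩

/-- Tail estimate from the growth condition. -/
lemma tail (hu : CplusHalf u) {R : ℝ} (hR : 0 ≤ R) :
    ∃ M ≥ (1:ℝ), ∀ s ≥ M, ∀ r, 0 ≤ r → r ≤ R →
      Real.exp (2 * Real.sqrt (r * s)) / u s ≤ Real.exp (-Real.sqrt s) := by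
  obtain ⟨M₀, hM₀⟩ := (eventually_atTop.1 (hu.2.2.eventually_ge_atTop (2 * Real.sqrt R + 1)))
  refine ⟨max M₀ 1, le_max_right _ _, fun s hs r hr hrR => ?_⟩
  have hs1 : (1:ℝ) ≤ s := le_trans (le_max_right _ _) hs
  have hs0 : (0:ℝ) < s := lt_of_lt_of_le one_pos hs1
  have hss : (0:ℝ) < Real.sqrt s := Real.sqrt_pos.2 hs0
  have hlog : (2 * Real.sqrt R + 1) ≤ Real.log (u s) / Real.sqrt s :=
    hM₀ s (le_trans (le_max_left _ _) hs)
  have hlog' : (2 * Real.sqrt R + 1) * Real.sqrt s ≤ Real.log (u s) :=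
    (le_div_iff₀ hss).1 hlog
  have hus : 0 < u s := hu.2.1 s (le_of_lt hs0)
  have hue : Real.exp ((2 * Real.sqrt R + 1) * Real.sqrt s) ≤ u s := by
    calc Real.exp ((2 * Real.sqrt R + 1) * Real.sqrt s) ≤ Real.exp (Real.log (u s)) :=
          Real.exp_le_exp.2 hlog'
      _ = u s := Real.exp_log hus
  have hnum : 2 * Real.sqrt (r * s) ≤ 2 * Real.sqrt R * Real.sqrt s := by
    rw [Real.sqrt_mul hr]
    have := Real.sqrt_le_sqrt hrR
    nlinarith [Real.sqrt_nonneg s, Real.sqrt_nonneg r]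
  calc Real.exp (2 * Real.sqrt (r * s)) / u s
      ≤ Real.exp (2 * Real.sqrt R * Real.sqrt s) / Real.exp ((2 * Real.sqrt R + 1) * Real.sqrt s) := by
        apply div_le_div₀ (Real.exp_pos _).le (Real.exp_le_exp.2 hnum) (Real.exp_pos _) hue
    _ = Real.exp (-Real.sqrt s) := by
        rw [← Real.exp_sub]; ring_nf
  
/-- Head estimate from continuity and positivity. -/
lemma head (hu : CplusHalf u) {M : ℝ} (hM : 0 < M) :
    ∃ c > (0:ℝ), ∀ s, 0 < s → s ≤ M → (u s)⁻¹ ≤ c := by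
  obtain ⟨s₀, hs₀, hmin⟩ := (isCompact_Icc (a := (0:ℝ)) (b := M)).exists_isMinOn
    (nonempty_Icc.2 hM.le) (hu.1.mono (Icc_subset_Ici_self))
  have hus₀ : 0 < u s₀ := hu.2.1 s₀ hs₀.1
  refine ⟨(u s₀)⁻¹, inv_pos.2 hus₀, fun s hs hsM => ?_⟩
  exact inv_anti₀ hus₀ (hmin ⟨hs.le, hsM⟩)

lemma bddAbove_Sset (hu : CplusHalf u) {r : ℝ} (hr : 0 ≤ r) : BddAbove (Sset u r) := by
  obtain ⟨M, hM1, hM⟩ := tail hu hr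
  have hM0 : 0 < M := lt_of_lt_of_le one_pos hM1
  obtain ⟨c, hc, hhead⟩ := head hu hM0
  refine ⟨max 1 (Real.exp (2 * Real.sqrt (r * M)) * c), fun y hy => ?_⟩
  obtain ⟨s, hs, rfl⟩ := hy
  rcases le_total M s with h | h
  · calc Real.exp (2 * Real.sqrt (r * s)) / u s ≤ Real.exp (-Real.sqrt s) :=
        hM s h r hr le_rfl
      _ ≤ 1 := Real.exp_le_one_iff.2 (neg_nonpos.2 (Real.sqrt_nonneg s))
      _ ≤ _ := le_max_left _ _
  · have hus : 0 < u s := hu.2.1 s hs.le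
    calc Real.exp (2 * Real.sqrt (r * s)) / u s
        = Real.exp (2 * Real.sqrt (r * s)) * (u s)⁻¹ := div_eq_mul_inv _ _
      _ ≤ Real.exp (2 * Real.sqrt (r * M)) * c := by
          apply mul_le_mul _ (hhead s hs h) (inv_nonneg.2 hus.le) (Real.exp_pos _).le
          exact Real.exp_le_exp.2 (by
            have : r * s ≤ r * M := mul_le_mul_of_nonneg_left h hr
            have := Real.sqrt_le_sqrt this
            linarith)
      _ ≤ _ := le_max_right _ _

lemma le_dualLeg (hu : CplusHalf u) {r : ℝ} (hr : 0 ≤ r) {s : ℝ} (hs : 0 < s) :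
    Real.exp (2 * Real.sqrt (r * s)) / u s ≤ dualLeg u r :=
  le_csSup (bddAbove_Sset hu hr) (mem_Sset hs)

lemma dualLeg_pos (hu : CplusHalf u) {r : ℝ} (hr : 0 ≤ r) : 0 < dualLeg u r :=
  lt_of_lt_of_le (div_pos (Real.exp_pos _) (hu.2.1 1 (by norm_num : (1:ℝ) ∈ Ici 0))) (le_dualLeg hu hr one_pos)

lemma dualLeg_mono (hu : CplusHalf u) : MonotoneOn (dualLeg u) (Ici 0) := by
  intro r hr r' hr' hle
  rw [dualLeg_eq]
  apply csSup_le (Sset_nonempty u r)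
  rintro y ⟨s, hs, rfl⟩
  calc Real.exp (2 * Real.sqrt (r * s)) / u s
      ≤ Real.exp (2 * Real.sqrt (r' * s)) / u s := by
        have hus : 0 < u s := hu.2.1 s hs.le
        have h1 : r * s ≤ r' * s := mul_le_mul_of_nonneg_right hle hs.le
        have h2 := Real.sqrt_le_sqrt h1
        gcongr
    _ ≤ dualLeg u r' := le_dualLeg hu (le_trans hr hle) hs

/-- Key Lipschitz-type estimate. -/
lemma key (hu : CplusHalf u) {R : ℝ} (hR : 0 ≤ R) :
    ∃ M ≥ (1:ℝ), ∀ r r', 0 ≤ r → r ≤ r' → r' ≤ R →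
      dualLeg u r' ≤ Real.exp (2 * Real.sqrt M * (Real.sqrt r' - Real.sqrt r)) * dualLeg u r := by
  obtain ⟨M₀, hM₀1, hM₀⟩ := tail hu hR
  have h0 : 0 < dualLeg u 0 := dualLeg_pos hu le_rfl
  -- choose M ≥ M₀ with exp (-√M) ≤ dualLeg u 0
  set M₁ : ℝ := (max 0 (-Real.log (dualLeg u 0))) ^ 2 with hM₁def
  refine ⟨max M₀ (max M₁ 1), le_trans hM₀1 (le_max_left _ _), fun r r' hr hle hR' => ?_⟩
  set M := max M₀ (max M₁ 1) with hMdef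
  have hM1 : (1:ℝ) ≤ M := le_trans (le_max_right _ _) (le_max_right _ _)
  have hMtail : ∀ s ≥ M, ∀ ρ, 0 ≤ ρ → ρ ≤ R →
      Real.exp (2 * Real.sqrt (ρ * s)) / u s ≤ Real.exp (-Real.sqrt s) :=
    fun s hs => hM₀ s (le_trans (le_max_left _ _) hs)
  have hexpM : Real.exp (-Real.sqrt M) ≤ dualLeg u 0 := by
    have hM₁M : M₁ ≤ M := le_trans (le_max_left _ _) (le_max_right _ _)
    have h1 : -Real.log (dualLeg u 0) ≤ Real.sqrt M := by
      calc -Real.log (dualLeg u 0) ≤ max 0 (-Real.log (dualLeg u 0)) := le_max_right _ _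
        _ = Real.sqrt M₁ := by rw [hM₁def, Real.sqrt_sq (le_max_left _ _)]
        _ ≤ Real.sqrt M := Real.sqrt_le_sqrt hM₁M
    calc Real.exp (-Real.sqrt M) ≤ Real.exp (Real.log (dualLeg u 0)) :=
          Real.exp_le_exp.2 (by linarith)
      _ = dualLeg u 0 := Real.exp_log h0
  have hr' : 0 ≤ r' := le_trans hr hle
  have hsd : 0 ≤ Real.sqrt r' - Real.sqrt r := sub_nonneg.2 (Real.sqrt_le_sqrt hle)
  have hexp1 : (1:ℝ) ≤ Real.exp (2 * Real.sqrt M * (Real.sqrt r' - Real.sqrt r)) :=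
    Real.one_le_exp_iff.2 (by positivity)
  have hdr : 0 < dualLeg u r := dualLeg_pos hu hr
  rw [dualLeg_eq]
  apply csSup_le (Sset_nonempty u r')
  rintro y ⟨s, hs, rfl⟩
  rcases le_total M s with h | h
  · -- tail case
    calc Real.exp (2 * Real.sqrt (r' * s)) / u s ≤ Real.exp (-Real.sqrt s) :=
        hMtail s h r' hr' hR'
      _ ≤ Real.exp (-Real.sqrt M) := Real.exp_le_exp.2 (neg_le_neg (Real.sqrt_le_sqrt h))
      _ ≤ dualLeg u 0 := hexpM
      _ ≤ dualLeg u r := dualLeg_mono hu (Set.mem_Ici.2 le_rfl) hr hr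
      _ ≤ _ := le_mul_of_one_le_left hdr.le hexp1
  · -- head case
    have hus : 0 < u s := hu.2.1 s hs.le
    have hsqrt : Real.sqrt (r' * s) ≤ (Real.sqrt r' - Real.sqrt r) * Real.sqrt M
        + Real.sqrt (r * s) := by
      rw [Real.sqrt_mul hr', Real.sqrt_mul hr]
      have h1 : Real.sqrt s ≤ Real.sqrt M := Real.sqrt_le_sqrt h
      nlinarith [Real.sqrt_nonneg s]
    calc Real.exp (2 * Real.sqrt (r' * s)) / u s
        ≤ Real.exp (2 * ((Real.sqrt r' - Real.sqrt r) * Real.sqrt M + Real.sqrt (r * s))) / u s := by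
          gcongr
      _ = Real.exp (2 * Real.sqrt M * (Real.sqrt r' - Real.sqrt r)) *
            (Real.exp (2 * Real.sqrt (r * s)) / u s) := by
          rw [mul_div_assoc', ← Real.exp_add]; ring_nf
      _ ≤ _ := by
          apply mul_le_mul_of_nonneg_left (le_dualLeg hu hr hs) (Real.exp_pos _).le

lemma dualLeg_continuousOn (hu : CplusHalf u) : ContinuousOn (dualLeg u) (Ici 0) := by
  intro a ha
  have ha0 : (0:ℝ) ≤ a := ha
  obtain ⟨M, hM1, hkey⟩ := key hu (le_trans ha0 (le_of_lt (lt_add_one a)))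
  set K := 2 * Real.sqrt M with hK
  have hda : 0 < dualLeg u a := dualLeg_pos hu ha0
  -- squeeze
  have hcont : ContinuousAt (fun r => Real.exp (K * |Real.sqrt r - Real.sqrt a|)) a := by
    apply Real.continuous_exp.continuousAt.comp
    exact (continuous_const.mul ((Real.continuous_sqrt.sub continuous_const).abs)).continuousAt
  have hcont' : ContinuousAt (fun r => Real.exp (-(K * |Real.sqrt r - Real.sqrt a|))) a := by
    apply Real.continuous_exp.continuousAt.comp
    exact ((continuous_const.mul ((Real.continuous_sqrt.sub continuous_const).abs)).neg).continuousAt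
  have hval : Real.exp (K * |Real.sqrt a - Real.sqrt a|) = 1 := by simp
  have hval' : Real.exp (-(K * |Real.sqrt a - Real.sqrt a|)) = 1 := by simp
  unfold ContinuousWithinAt
  have htu : Tendsto (fun r => Real.exp (K * |Real.sqrt r - Real.sqrt a|))
      (nhdsWithin a (Ici 0)) (nhds (Real.exp (K * |Real.sqrt a - Real.sqrt a|))) :=
    hcont.tendsto.mono_left nhdsWithin_le_nhds
  have htl : Tendsto (fun r => Real.exp (-(K * |Real.sqrt r - Real.sqrt a|)))
      (nhdsWithin a (Ici 0)) (nhds (Real.exp (-(K * |Real.sqrt a - Real.sqrt a|)))) :=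
    hcont'.tendsto.mono_left nhdsWithin_le_nhds
  have hub : Tendsto (fun r => Real.exp (K * |Real.sqrt r - Real.sqrt a|) * dualLeg u a)
      (nhdsWithin a (Ici 0)) (nhds (dualLeg u a)) := by
    have := htu.mul_const (dualLeg u a)
    rwa [hval, one_mul] at this
  have hlb : Tendsto (fun r => Real.exp (-(K * |Real.sqrt r - Real.sqrt a|)) * dualLeg u a)
      (nhdsWithin a (Ici 0)) (nhds (dualLeg u a)) := by
    have := htl.mul_const (dualLeg u a)
    rwa [hval', one_mul] at this
  apply tendsto_of_tendsto_of_tendsto_of_le_of_le' hlb hub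
  · -- lower bound eventually
    filter_upwards [self_mem_nhdsWithin,
      mem_nhdsWithin_of_mem_nhds (Iic_mem_nhds (lt_add_one a))] with r hr hrle
    rcases le_total r a with h | h
    · -- r ≤ a : dualLeg a ≤ exp(K(√a-√r)) dualLeg r
      have habs : |Real.sqrt r - Real.sqrt a| = Real.sqrt a - Real.sqrt r := by
        rw [abs_sub_comm, abs_of_nonneg (sub_nonneg.2 (Real.sqrt_le_sqrt h))]
      have h2 := hkey r a hr h (le_of_lt (lt_add_one a))
      rw [habs]
      have hdr : 0 < dualLeg u r := dualLeg_pos hu hr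
      -- exp(-(K*(√a-√r))) * dualLeg a ≤ dualLeg r
      calc Real.exp (-(K * (Real.sqrt a - Real.sqrt r))) * dualLeg u a
          ≤ Real.exp (-(K * (Real.sqrt a - Real.sqrt r))) *
              (Real.exp (K * (Real.sqrt a - Real.sqrt r)) * dualLeg u r) := by
            apply mul_le_mul_of_nonneg_left _ (Real.exp_pos _).le
            exact h2
        _ = dualLeg u r := by rw [← mul_assoc, ← Real.exp_add]; simp
    · -- a ≤ r : lower bound ≤ dualLeg a ≤ dualLeg r
      have h1 : Real.exp (-(K * |Real.sqrt r - Real.sqrt a|)) ≤ 1 :=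
        Real.exp_le_one_iff.2 (neg_nonpos.2 (by positivity))
      calc Real.exp (-(K * |Real.sqrt r - Real.sqrt a|)) * dualLeg u a
          ≤ 1 * dualLeg u a := mul_le_mul_of_nonneg_right h1 hda.le
        _ = dualLeg u a := one_mul _
        _ ≤ dualLeg u r := dualLeg_mono hu ha0 hr h
  · -- upper bound eventually
    filter_upwards [self_mem_nhdsWithin,
      mem_nhdsWithin_of_mem_nhds (Iic_mem_nhds (lt_add_one a))] with r hr hrle
    rcases le_total r a with h | h
    · have h1 : (1:ℝ) ≤ Real.exp (K * |Real.sqrt r - Real.sqrt a|) :=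
        Real.one_le_exp_iff.2 (by positivity)
      calc dualLeg u r ≤ dualLeg u a := dualLeg_mono hu hr ha0 h
        _ = 1 * dualLeg u a := (one_mul _).symm
        _ ≤ _ := mul_le_mul_of_nonneg_right h1 hda.le
    · have habs : |Real.sqrt r - Real.sqrt a| = Real.sqrt r - Real.sqrt a :=
        abs_of_nonneg (sub_nonneg.2 (Real.sqrt_le_sqrt h))
      rw [habs]
      exact hkey a r ha0 h hrle

lemma dualLeg_tendsto (hu : CplusHalf u) :
    Tendsto (fun r => Real.log (dualLeg u r) / Real.sqrt r) atTop atTop := by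
  rw [tendsto_atTop]
  intro C
  set m := max C 1 with hm
  have hm1 : (1:ℝ) ≤ m := le_max_right _ _
  have hm0 : (0:ℝ) < m := lt_of_lt_of_le one_pos hm1
  set s := m ^ 2 with hsdef
  have hs0 : 0 < s := by positivity
  have hss : Real.sqrt s = m := by rw [hsdef, Real.sqrt_sq hm0.le]
  set L := |Real.log (u s)| with hL
  filter_upwards [eventually_ge_atTop (max 1 (L ^ 2))] with r hrge
  have hr1 : (1:ℝ) ≤ r := le_trans (le_max_left _ _) hrge
  have hr0 : (0:ℝ) ≤ r := le_trans zero_le_one hr1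
  have hsr : (1:ℝ) ≤ Real.sqrt r := by
    rw [show (1:ℝ) = Real.sqrt 1 by simp]; exact Real.sqrt_le_sqrt hr1
  have hsr0 : 0 < Real.sqrt r := lt_of_lt_of_le one_pos hsr
  have hLr : L ≤ Real.sqrt r := by
    calc L = Real.sqrt (L ^ 2) := by rw [Real.sqrt_sq (abs_nonneg _)]
      _ ≤ Real.sqrt r := Real.sqrt_le_sqrt (le_trans (le_max_right _ _) hrge)
  have hus : 0 < u s := hu.2.1 s hs0.le
  have helem := le_dualLeg hu hr0 hs0
  have helempos : 0 < Real.exp (2 * Real.sqrt (r * s)) / u s :=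
    div_pos (Real.exp_pos _) hus
  have hlog : 2 * Real.sqrt (r * s) - Real.log (u s) ≤ Real.log (dualLeg u r) := by
    calc 2 * Real.sqrt (r * s) - Real.log (u s)
        = Real.log (Real.exp (2 * Real.sqrt (r * s)) / u s) := by
          rw [Real.log_div (Real.exp_pos _).ne' hus.ne', Real.log_exp]
      _ ≤ Real.log (dualLeg u r) := Real.log_le_log helempos helem
  have hsqrt : Real.sqrt (r * s) = Real.sqrt r * m := by
    rw [Real.sqrt_mul hr0, hss]
  rw [le_div_iff₀ hsr0]
  have hLlog : Real.log (u s) ≤ L := le_abs_self _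
  -- C * √r ≤ 2 √r m - L ≤ 2 √(rs) - log u s ≤ log dualLeg
  have key1 : C * Real.sqrt r ≤ 2 * Real.sqrt (r * s) - Real.log (u s) := by
    rw [hsqrt]
    have h1 : C ≤ m := le_max_left _ _
    nlinarith
  linarith

lemma dualLeg_CplusHalf (hu : CplusHalf u) : CplusHalf (dualLeg u) :=
  ⟨dualLeg_continuousOn hu, fun r hr => dualLeg_pos hu hr, dualLeg_tendsto hu⟩

lemma dualLeg_convexOn (hu : CplusHalf u) :
    ConvexOn ℝ (Ici 0) (fun x => Real.log (dualLeg u (x ^ 2))) := by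
  refine ⟨convex_Ici 0, ?_⟩
  intro x hx y hy a b ha hb hab
  simp only [smul_eq_mul]
  have hx0 : (0:ℝ) ≤ x := hx
  have hy0 : (0:ℝ) ≤ y := hy
  set z := a * x + b * y with hz
  have hz0 : 0 ≤ z := by positivity
  have hPx : 0 < dualLeg u (x ^ 2) := dualLeg_pos hu (by positivity)
  have hPy : 0 < dualLeg u (y ^ 2) := dualLeg_pos hu (by positivity)
  have main : dualLeg u (z ^ 2) ≤ dualLeg u (x ^ 2) ^ a * dualLeg u (y ^ 2) ^ b := by
    rw [dualLeg_eq]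
    apply csSup_le (Sset_nonempty u _)
    rintro w ⟨s, hs, rfl⟩
    have hus : 0 < u s := hu.2.1 s hs.le
    have hsq : ∀ t : ℝ, 0 ≤ t → Real.sqrt (t ^ 2 * s) = t * Real.sqrt s := by
      intro t ht
      rw [Real.sqrt_mul (by positivity), Real.sqrt_sq ht]
    have hxel : Real.exp (2 * (x * Real.sqrt s)) / u s ≤ dualLeg u (x ^ 2) := by
      have := le_dualLeg hu (r := x ^ 2) (by positivity) hs
      rwa [hsq x hx0] at this
    have hyel : Real.exp (2 * (y * Real.sqrt s)) / u s ≤ dualLeg u (y ^ 2) := by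
      have := le_dualLeg hu (r := y ^ 2) (by positivity) hs
      rwa [hsq y hy0] at this
    have hsplit : Real.exp (2 * Real.sqrt (z ^ 2 * s)) / u s =
        (Real.exp (2 * (x * Real.sqrt s)) / u s) ^ a *
        (Real.exp (2 * (y * Real.sqrt s)) / u s) ^ b := by
      rw [hsq z hz0]
      rw [Real.div_rpow (Real.exp_pos _).le hus.le, Real.div_rpow (Real.exp_pos _).le hus.le]
      rw [← Real.exp_mul, ← Real.exp_mul]
      rw [div_mul_div_comm, ← Real.exp_add, ← Real.rpow_add hus]
      rw [hab, Real.rpow_one]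
      congr 1
      rw [hz]; ring_nf
    rw [hsplit]
    apply mul_le_mul
    · exact Real.rpow_le_rpow (div_pos (Real.exp_pos _) hus).le hxel ha
    · exact Real.rpow_le_rpow (div_pos (Real.exp_pos _) hus).le hyel hb
    · positivity
    · positivity
  have hzpos : 0 < dualLeg u (z ^ 2) := dualLeg_pos hu (by positivity)
  calc Real.log (dualLeg u (z ^ 2))
      ≤ Real.log (dualLeg u (x ^ 2) ^ a * dualLeg u (y ^ 2) ^ b) :=
        Real.log_le_log hzpos main
    _ = a * Real.log (dualLeg u (x ^ 2)) + b * Real.log (dualLeg u (y ^ 2)) := by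
        rw [Real.log_mul (Real.rpow_pos_of_pos hPx _).ne' (Real.rpow_pos_of_pos hPy _).ne',
          Real.log_rpow hPx, Real.log_rpow hPy]

end Stmt18Aux

theorem stmt18 (u : ℝ → ℝ) (hu : CplusHalf u) :
    CplusHalf (dualLeg u) ∧ MonotoneOn (dualLeg u) (Ici 0) ∧
    ConvexOn ℝ (Ici 0) (fun x => Real.log (dualLeg u (x ^ 2))) :=
  ⟨Stmt18Aux.dualLeg_CplusHalf hu, Stmt18Aux.dualLeg_mono hu, Stmt18Aux.dualLeg_convexOn hu⟩
end
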